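/- arXiv:1708.08540 — 4 statements merged into one kernel-verified Lean document; each statement's English description precedes it below -/
import Mathlib

section
/- Let M^m be a biharmonic hypersurface in a space form N^{m+1}(C) of constant sectional curvature C, so that in particular the tangency condition A(∇H) = −(m/2)H∇H holds. Then at every point, Ric^M(∇H, ∇H) = ((m−1)C − (3/4)m²H²)|∇H|². -/
open scoped RealInnerProductSpace

section Eigenvector

variable {V : Type*} [NormedAddCommGroup V] [InnerProductSpace ℝ V]
  {A : V →ₗ[ℝ] V} {x : V} {c : ℝ}

theorem real_inner_apply_self_of_apply_eq_smul (hx : A x = c • x) :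
    ⟪A x, x⟫ = c * ‖x‖ ^ 2 := by
  rw [hx, real_inner_smul_left, real_inner_self_eq_norm_sq]

theorem real_inner_apply_apply_of_apply_eq_smul (hx : A x = c • x) :
    ⟪A x, A x⟫ = c ^ 2 * ‖x‖ ^ 2 := by
  rw [hx, real_inner_smul_left, real_inner_smul_right, real_inner_self_eq_norm_sq]
  ring

end Eigenvector

/-- **The Ricci curvature of a biharmonic hypersurface in a space form, evaluated on
`∇H`.**  Let `M^m` be a biharmonic hypersurface in a space form `N^{m+1}(C)` of constant
sectional curvature `C`.  At a point, `V` is the tangent space, `A` the shape operator,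
`H` the mean curvature, `gradH = ∇H`, and `Ric` the Ricci curvature of `M`.  In a space
form `Ric^N(X,Y) = mC⟨X,Y⟩` and `R^N(X,ξ,Y,ξ) = C⟨X,Y⟩` for tangent `X, Y`, so the
contracted Gauss equation reads
`mC⟨X,Y⟩ = Ric^M(X,Y) + ⟨AX,AY⟩ − mH⟨AX,Y⟩ + C⟨X,Y⟩`.  The biharmonic equation gives
the tangency condition `A(∇H) = −(m/2)H∇H`.  Then at every point
`Ric^M(∇H, ∇H) = ((m−1)C − (3/4)m²H²)|∇H|²`. -/
theorem ricci_gradH_biharmonic_space_form {V : Type} [NormedAddCommGroup V]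
    [InnerProductSpace ℝ V] (m : ℕ) (C H : ℝ) (A : V →ₗ[ℝ] V)
    (Ric : V → V → ℝ) (gradH : V)
    (gauss : ∀ X Y : V,
      (m : ℝ) * C * ⟪X, Y⟫ = Ric X Y + ⟪A X, A Y⟫ - m * H * ⟪A X, Y⟫ + C * ⟪X, Y⟫)
    (tangency : A gradH = -(((m : ℝ) / 2) * H) • gradH) :
    Ric gradH gradH = (((m : ℝ) - 1) * C - 3 / 4 * (m : ℝ) ^ 2 * H ^ 2) * ‖gradH‖ ^ 2 := by
  have hGauss := gauss gradH gradH
  rw [real_inner_self_eq_norm_sq, real_inner_apply_apply_of_apply_eq_smul tangency,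
    real_inner_apply_self_of_apply_eq_smul tangency] at hGauss
  linear_combination -hGauss
end

section
/- If a hypersurface M^m in a space form N^{m+1}(C) is Einstein with Ric^M = μg (μ constant), then the mean curvature identity μ|∇H|² = ((m−1)C − (3/4)m²H²)|∇H|², valid at points where A(∇H) = −(m/2)H∇H, forces H to be locally constant: on any open set where ∇H ≠ 0, H² = (4/(3m²))((m−1)C − μ) is constant, a contradiction; hence ∇H ≡ 0. -/
noncomputable section

open scoped RealInnerProductSpace BigOperators

/-- Abstract data encoding an isometrically immersed (connected, orientable) hypersurface
`M^m ↪ N^{m+1}`: `V` is a model for the tangent spaces of `M` (an `m`-dimensional real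
inner product space), `A` is the shape operator field, `H` the mean curvature function
(so `trace A = m H`), together with the gradient, Laplace and Hessian operators and the
Ricci curvature of the induced metric, subject to the standard rules of Riemannian
calculus (connectedness of `M` is encoded by `const_of_grad`, and the Bochner formula
holds).  `mixed p X Y` denotes the ambient curvature term `R^N(X, ξ, Y, ξ)` at `p`,
where `ξ` is the chosen unit normal. -/
structure HypersurfaceData (m : ℕ) (M : Type) (V : Type)
    [NormedAddCommGroup V] [InnerProductSpace ℝ V] [FiniteDimensional ℝ V] : Type where
  dimV : Module.finrank ℝ V = m
  /-- the shape operator -/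
  A : M → V →ₗ[ℝ] V
  A_symm : ∀ p (x y : V), ⟪A p x, y⟫ = ⟪x, A p y⟫
  /-- the mean curvature function -/
  H : M → ℝ
  trace_A : ∀ p, LinearMap.trace ℝ V (A p) = m * H p
  /-- the gradient operator of `(M, g)` -/
  grad : (M → ℝ) → M → V
  /-- the Laplace operator of `(M, g)` -/
  lap : (M → ℝ) → M → ℝ
  /-- `hess2 f` is `|∇df|²`, the squared norm of the Hessian of `f` -/
  hess2 : (M → ℝ) → M → ℝ
  /-- the Ricci curvature of `(M, g)` -/
  ricci : M → V → V → ℝ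
  /-- `mixed p X Y = R^N(X, ξ, Y, ξ)` -/
  mixed : M → V → V → ℝ
  grad_add : ∀ f g : M → ℝ, grad (fun p => f p + g p) = fun p => grad f p + grad g p
  grad_mul : ∀ f g : M → ℝ,
    grad (fun p => f p * g p) = fun p => f p • grad g p + g p • grad f p
  grad_const : ∀ c : ℝ, grad (fun _ => c) = fun _ => 0
  lap_const : ∀ c : ℝ, lap (fun _ => c) = fun _ => 0
  const_of_grad : ∀ f : M → ℝ, (∀ p, grad f p = 0) → ∀ p q, f p = f q
  hess2_nonneg : ∀ f p, 0 ≤ hess2 f p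
  hess2_bound : ∀ f p, (lap f p) ^ 2 ≤ m * hess2 f p
  bochner : ∀ (f : M → ℝ) (p : M),
    lap (fun q => ‖grad f q‖ ^ 2) p
      = 2 * (hess2 f p + ricci p (grad f p) (grad f p) + ⟪grad f p, grad (lap f) p⟫)

namespace HypersurfaceData

variable {m : ℕ} {M V : Type} [NormedAddCommGroup V] [InnerProductSpace ℝ V]
  [FiniteDimensional ℝ V] (D : HypersurfaceData m M V)

/-- `|A|²`, the squared norm of the shape operator. -/
def normA2 (p : M) : ℝ := LinearMap.trace ℝ V (D.A p ∘ₗ D.A p)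

/-- The scalar curvature of `M` (trace of the Ricci curvature). -/
def scal (p : M) : ℝ :=
  ∑ i, D.ricci p (stdOrthonormalBasis ℝ V i) (stdOrthonormalBasis ℝ V i)

/-- `M` has constant scalar curvature. -/
def ConstScal : Prop := ∀ p q, D.scal p = D.scal q

/-- `M` is minimal, i.e. `H ≡ 0`. -/
def Minimal : Prop := ∀ p, D.H p = 0

/-- The biharmonic equations for a hypersurface of an Einstein manifold with
`Ric^N = lam·h` :  `ΔH = H(|A|² - lam)` and `A(∇H) + (m/2) H ∇H = 0`. -/
def IsBiharmonic (lam : ℝ) : Prop :=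
  (∀ p, D.lap D.H p = D.H p * (D.normA2 p - lam)) ∧
  (∀ p, D.A p (D.grad D.H p) + ((m : ℝ) / 2 * D.H p) • D.grad D.H p = 0)

/-- The contracted Gauss equation for a hypersurface of a space form of constant
sectional curvature `C`, where `Ric^N(X,Y) = m C ⟨X,Y⟩` and `R^N(X,ξ,Y,ξ) = C ⟨X,Y⟩`
for tangent `X, Y`. -/
def SpaceFormGauss (C : ℝ) : Prop :=
  ∀ p (X Y : V), (m : ℝ) * C * ⟪X, Y⟫
    = D.ricci p X Y + ⟪D.A p X, D.A p Y⟫ - m * D.H p * ⟪D.A p X, Y⟫ + C * ⟪X, Y⟫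

/-- The contracted Gauss equation for a hypersurface of an Einstein manifold with
`Ric^N = lam·h`. -/
def EinsteinAmbientGauss (lam : ℝ) : Prop :=
  ∀ p (X Y : V), lam * ⟪X, Y⟫
    = D.ricci p X Y + ⟪D.A p X, D.A p Y⟫ - m * D.H p * ⟪D.A p X, Y⟫ + D.mixed p X Y

/-- `Ric^N(ξ,ξ) = lam`: the trace over the tangent directions of `R^N(·,ξ,·,ξ)`
equals the ambient Ricci curvature in the normal direction. -/
def MixedTrace (lam : ℝ) : Prop :=
  ∀ p, ∑ i, D.mixed p (stdOrthonormalBasis ℝ V i) (stdOrthonormalBasis ℝ V i) = lam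

end HypersurfaceData

/-! The Einstein condition pins `H²` down at every point where `∇H ≠ 0`: there `∇H` is a
principal direction with principal curvature `-(m/2)H`, and the contracted Gauss equation
along it reads `μ = (m-1)C - (3/4)m²H²`. A function whose value is forced at every
noncritical point is constant on a connected manifold, because `(f - c)²` has vanishing
gradient everywhere; applied to `H²` and then to `H`, this gives `∇H ≡ 0`. -/

namespace HypersurfaceData

variable {m : ℕ} {M V : Type} [NormedAddCommGroup V] [InnerProductSpace ℝ V]
  [FiniteDimensional ℝ V] (D : HypersurfaceData m M V)

theorem grad_eq_zero_of_forall_eq {f : M → ℝ} {c : ℝ} (h : ∀ p, f p = c) (p : M) :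
    D.grad f p = 0 := by
  rw [show f = fun _ => c from funext h, D.grad_const]

theorem grad_add_const (f : M → ℝ) (c : ℝ) : D.grad (fun p => f p + c) = D.grad f := by
  rw [D.grad_add f (fun _ => c), D.grad_const]
  simp

theorem grad_mul_self (f : M → ℝ) :
    D.grad (fun p => f p * f p) = fun p => (2 * f p) • D.grad f p := by
  rw [D.grad_mul]
  ext1 p
  rw [two_mul, add_smul]

theorem grad_eq_zero_of_eq_of_grad_ne_zero {f : M → ℝ} {c : ℝ}
    (h : ∀ p, D.grad f p ≠ 0 → f p = c) (p : M) : D.grad f p = 0 := by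
  by_contra hp
  set g : M → ℝ := fun q => (f q + -c) * (f q + -c)
  have hg : ∀ q, D.grad g q = 0 := by
    intro q
    rw [D.grad_mul_self (fun q => f q + -c), D.grad_add_const]
    by_cases hq : D.grad f q = 0
    · simp [hq]
    · simp [h q hq]
  have hg0 : ∀ q, g q = 0 := fun q => by
    rw [D.const_of_grad g hg q p]
    simp [g, h p hp]
  have hfc : ∀ q, f q = c := fun q => by
    have hq := hg0 q
    simp only [g, mul_self_eq_zero] at hq
    linarith
  exact hp (D.grad_eq_zero_of_forall_eq hfc p)

theorem grad_eq_zero_of_sq_eq_of_grad_ne_zero {f : M → ℝ} {c : ℝ}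
    (h : ∀ p, D.grad f p ≠ 0 → f p ^ 2 = c) (p : M) : D.grad f p = 0 := by
  have hsq : ∀ q, D.grad (fun q => f q * f q) q = 0 :=
    D.grad_eq_zero_of_eq_of_grad_ne_zero fun q hq => by
      rw [D.grad_mul_self] at hq
      rw [← sq]
      exact h q (right_ne_zero_of_smul hq)
  refine D.grad_eq_zero_of_eq_of_grad_ne_zero (c := 0) (fun q hq => ?_) p
  have hq2 := hsq q
  rw [D.grad_mul_self] at hq2
  simpa using (smul_eq_zero.mp hq2).resolve_right hq

variable {D} in
theorem SpaceFormGauss.einstein_eq_of_apply_eq_smul {C μ : ℝ} (hgauss : D.SpaceFormGauss C)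
    {p : M} (heinstein : ∀ X Y : V, D.ricci p X Y = μ * ⟪X, Y⟫) {X : V} {a : ℝ}
    (hX : D.A p X = a • X) (hX0 : X ≠ 0) :
    μ = ((m : ℝ) - 1) * C - a ^ 2 + m * D.H p * a := by
  have h := hgauss p X X
  rw [heinstein, hX, real_inner_smul_left, real_inner_smul_right, real_inner_smul_left] at h
  have hXX : ⟪X, X⟫ ≠ 0 := inner_self_ne_zero.mpr hX0
  apply mul_right_cancel₀ hXX
  linear_combination -h

end HypersurfaceData

/-- **Constancy of the mean curvature of Einstein hypersurfaces of space forms.**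
Let `M^m` be an Einstein hypersurface (`Ric^M = μ g`, `μ` a real constant) of a space
form of curvature `C` satisfying the second biharmonic equation
`A(∇H) = −(m/2)H∇H` at every point.  The identity
`μ|∇H|² = ((m−1)C − (3/4)m²H²)|∇H|²` forces `H` to be locally constant: wherever
`∇H ≠ 0` we get `H² = (4/(3m²))((m−1)C − μ)` constant, a contradiction; hence `∇H ≡ 0`
and `H` is constant on `M`. -/
theorem einstein_hypersurface_mean_curvature_constant {M V : Type}
    [NormedAddCommGroup V] [InnerProductSpace ℝ V] [FiniteDimensional ℝ V]
    {m : ℕ} (hm : 0 < m) (D : HypersurfaceData m M V) (C μ : ℝ)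
    (hgauss : D.SpaceFormGauss C)
    (heinstein : ∀ p (X Y : V), D.ricci p X Y = μ * ⟪X, Y⟫)
    (htangency : ∀ p,
      D.A p (D.grad D.H p) + ((m : ℝ) / 2 * D.H p) • D.grad D.H p = 0) :
    (∀ p, D.grad D.H p ≠ 0 →
        (D.H p) ^ 2 = 4 / (3 * (m : ℝ) ^ 2) * (((m : ℝ) - 1) * C - μ)) ∧
      (∀ p, D.grad D.H p = 0) ∧ (∀ p q, D.H p = D.H q) := by
  have hH2 : ∀ p, D.grad D.H p ≠ 0 →
      D.H p ^ 2 = 4 / (3 * (m : ℝ) ^ 2) * (((m : ℝ) - 1) * C - μ) := fun p hp => by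
    have hprincipal : D.A p (D.grad D.H p) = (-((m : ℝ) / 2 * D.H p)) • D.grad D.H p := by
      rw [neg_smul]
      exact eq_neg_of_add_eq_zero_left (htangency p)
    have hμ := hgauss.einstein_eq_of_apply_eq_smul (heinstein p) hprincipal hp
    have hm0 : (m : ℝ) ≠ 0 := by positivity
    field_simp
    linear_combination 4 * hμ
  have hgradH := D.grad_eq_zero_of_sq_eq_of_grad_ne_zero hH2
  exact ⟨hH2, hgradH, D.const_of_grad D.H hgradH⟩
end
end

section
/- A biharmonic Einstein hypersurface of Euclidean space ℝ^{m+1} or of hyperbolic space H^{m+1} (m ≥ 3) is minimal. -/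
noncomputable section

open scoped RealInnerProductSpace BigOperators

/-!
The Gauss equation of an Einstein hypersurface of a space form reads `A² − mHA = c·I` with
`c = (m − 1)C − μ`. Biharmonicity makes `∇H` an eigenvector of `A` for the eigenvalue `−(m/2)H`,
so evaluating the Gauss equation on `∇H` gives `((3/4)m²H² − c)|∇H|² = 0`. The function
`F = (3/4)m²H² − c` then satisfies `∇(F²) = 0`, so `F` is either nowhere zero or identically
zero; in both cases `H` is constant. Then `ΔH = 0`, and the first biharmonic equation forces
`|A|² = mC ≤ 0` wherever `H ≠ 0`, i.e. `A = 0` and hence `H = 0` there.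
-/

namespace HypersurfaceData

variable {m : ℕ} {M V : Type} [NormedAddCommGroup V] [InnerProductSpace ℝ V]
  [FiniteDimensional ℝ V] (D : HypersurfaceData m M V)

theorem grad_add_apply (f g : M → ℝ) (p : M) :
    D.grad (fun q => f q + g q) p = D.grad f p + D.grad g p :=
  congrFun (D.grad_add f g) p

theorem grad_mul_apply (f g : M → ℝ) (p : M) :
    D.grad (fun q => f q * g q) p = f p • D.grad g p + g p • D.grad f p :=
  congrFun (D.grad_mul f g) p

theorem grad_const_apply (c : ℝ) (p : M) : D.grad (fun _ => c) p = 0 :=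
  congrFun (D.grad_const c) p

theorem grad_const_mul_apply (a : ℝ) (f : M → ℝ) (p : M) :
    D.grad (fun q => a * f q) p = a • D.grad f p := by
  rw [D.grad_mul_apply (fun _ => a) f, grad_const_apply, smul_zero, add_zero]

theorem grad_mul_self_apply (f : M → ℝ) (p : M) :
    D.grad (fun q => f q * f q) p = (2 * f p) • D.grad f p := by
  rw [grad_mul_apply, two_mul, add_smul]

theorem grad_eq_zero_of_mul_self_eq_const {f : M → ℝ} {k : ℝ} (hf : ∀ q, f q * f q = k)
    (p : M) : D.grad f p = 0 := by
  rcases eq_or_ne (f p) 0 with hp | hp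
  · have hf_zero : f = fun _ => 0 :=
      funext fun q => mul_self_eq_zero.mp (by rw [hf q, ← hf p, hp, mul_zero])
    rw [hf_zero, grad_const_apply]
  · have h : (2 * f p) • D.grad f p = 0 := by
      rw [← grad_mul_self_apply, show (fun q => f q * f q) = fun _ => k from funext hf,
        grad_const_apply]
    exact (smul_eq_zero.mp h).resolve_left (mul_ne_zero two_ne_zero hp)

/-- `∇(F²) = 4afF∇f = 0` for `F = af² + b`, so `F` is either nowhere zero or identically zero. -/
theorem grad_eq_zero_of_quadratic_smul_grad_eq_zero {f : M → ℝ} {a b : ℝ} (ha : a ≠ 0)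
    (h : ∀ q, (a * (f q * f q) + b) • D.grad f q = 0) (p : M) : D.grad f p = 0 := by
  set F : M → ℝ := fun q => a * (f q * f q) + b with hF
  have grad_F : ∀ q, D.grad F q = (2 * a * f q) • D.grad f q := fun q => by
    rw [hF, D.grad_add_apply, grad_const_mul_apply, grad_mul_self_apply, grad_const_apply,
      add_zero, smul_smul, mul_left_comm, mul_assoc]
  have grad_F_sq : ∀ q, D.grad (fun q => F q * F q) q = 0 := fun q => by
    rw [grad_mul_self_apply, grad_F, smul_smul,
      show 2 * F q * (2 * a * f q) = 4 * a * f q * F q by ring, mul_smul, h q, smul_zero]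
  have hF_sq : ∀ q, F q * F q = F p * F p := fun q => D.const_of_grad _ grad_F_sq q p
  rcases eq_or_ne (F p) 0 with hFp | hFp
  · have hf_sq : ∀ q, f q * f q = -b / a := fun q => by
      have hFq : F q = 0 := mul_self_eq_zero.mp (by rw [hF_sq q, hFp, mul_zero])
      rw [eq_div_iff ha]
      linear_combination hFq
    exact D.grad_eq_zero_of_mul_self_eq_const hf_sq p
  · exact (smul_eq_zero.mp (h p)).resolve_left hFp

theorem normA2_eq_sum_norm_sq (p : M) :
    D.normA2 p = ∑ i, ‖D.A p (stdOrthonormalBasis ℝ V i)‖ ^ 2 := by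
  rw [normA2, LinearMap.trace_eq_sum_inner _ (stdOrthonormalBasis ℝ V)]
  refine Finset.sum_congr rfl fun i _ => ?_
  rw [LinearMap.comp_apply, ← D.A_symm, real_inner_self_eq_norm_sq]

theorem normA2_nonneg (p : M) : 0 ≤ D.normA2 p := by
  rw [normA2_eq_sum_norm_sq]
  positivity

theorem A_eq_zero_of_normA2_eq_zero {p : M} (h : D.normA2 p = 0) : D.A p = 0 := by
  rw [normA2_eq_sum_norm_sq, Finset.sum_eq_zero_iff_of_nonneg fun i _ => by positivity] at h
  exact (stdOrthonormalBasis ℝ V).toBasis.ext fun i => by simpa using h i (Finset.mem_univ i)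

theorem H_eq_zero_of_normA2_nonpos (hm : m ≠ 0) {p : M} (h : D.normA2 p ≤ 0) : D.H p = 0 := by
  have htrace := D.trace_A p
  rw [D.A_eq_zero_of_normA2_eq_zero (le_antisymm h (D.normA2_nonneg p)), map_zero] at htrace
  exact (mul_eq_zero.mp htrace.symm).resolve_left (Nat.cast_ne_zero.mpr hm)

variable {D}

theorem SpaceFormGauss.inner_A_A_sub_of_einstein {C μ : ℝ} (hgauss : D.SpaceFormGauss C)
    (heinstein : ∀ p (X Y : V), D.ricci p X Y = μ * ⟪X, Y⟫) (p : M) (X Y : V) :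
    ⟪D.A p X, D.A p Y⟫ - m * D.H p * ⟪D.A p X, Y⟫ = ((m - 1) * C - μ) * ⟪X, Y⟫ := by
  linear_combination -hgauss p X Y - heinstein p X Y

theorem IsBiharmonic.grad_H_eq_zero_of_einstein {C μ lam : ℝ} (hm : m ≠ 0)
    (hgauss : D.SpaceFormGauss C) (heinstein : ∀ p (X Y : V), D.ricci p X Y = μ * ⟪X, Y⟫)
    (hbh : D.IsBiharmonic lam) (p : M) : D.grad D.H p = 0 := by
  have hm' : (m : ℝ) ≠ 0 := Nat.cast_ne_zero.mpr hm
  refine D.grad_eq_zero_of_quadratic_smul_grad_eq_zero (a := 3 / 4 * m ^ 2)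
    (b := -((m - 1) * C - μ)) (by positivity) (fun q => ?_) p
  set g := D.grad D.H q
  have hA : D.A q g = (-(m / 2 * D.H q)) • g := by
    rw [neg_smul, eq_neg_iff_add_eq_zero]
    exact hbh.2 q
  have hgauss_g := hgauss.inner_A_A_sub_of_einstein heinstein q g g
  rw [hA] at hgauss_g
  simp only [real_inner_smul_left, real_inner_smul_right] at hgauss_g
  rcases mul_eq_zero.mp (by linear_combination hgauss_g :
      (3 / 4 * (m : ℝ) ^ 2 * (D.H q * D.H q) + -((m - 1) * C - μ)) * ⟪g, g⟫ = 0) with h | h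
  · rw [h, zero_smul]
  · rw [inner_self_eq_zero.mp h, smul_zero]

theorem IsBiharmonic.minimal_of_grad_H_eq_zero {C : ℝ} (hm : m ≠ 0) (hC : C ≤ 0)
    (hbh : D.IsBiharmonic (m * C)) (hgrad : ∀ p, D.grad D.H p = 0) : D.Minimal := by
  intro p
  have hH : D.H = fun _ => D.H p := funext fun q => D.const_of_grad D.H hgrad q p
  have hlap : D.lap D.H p = 0 := by
    rw [hH]
    exact congrFun (D.lap_const _) p
  rcases mul_eq_zero.mp ((hbh.1 p).symm.trans hlap) with h | h
  · exact h
  · refine D.H_eq_zero_of_normA2_nonpos hm ?_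
    nlinarith [mul_nonpos_of_nonneg_of_nonpos (Nat.cast_nonneg m : (0 : ℝ) ≤ m) hC]

end HypersurfaceData

/-- **Corollary (Chen-type result for Einstein hypersurfaces).**  A biharmonic Einstein
hypersurface (`Ric^M = μ g` for a constant `μ`, `m ≥ 3`) of Euclidean space `ℝ^{m+1}`
(a space form with `C = 0`) or of hyperbolic space `H^{m+1}` (a space form with
`C = −1`) is minimal. -/
theorem biharmonic_einstein_hypersurface_euclidean_hyperbolic_minimal {M V : Type}
    [NormedAddCommGroup V] [InnerProductSpace ℝ V] [FiniteDimensional ℝ V]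
    {m : ℕ} (hm : 3 ≤ m) (D : HypersurfaceData m M V) (C μ : ℝ)
    (hC : C = 0 ∨ C = -1)
    (hgauss : D.SpaceFormGauss C)
    (heinstein : ∀ p (X Y : V), D.ricci p X Y = μ * ⟪X, Y⟫)
    (hbh : D.IsBiharmonic (m * C)) :
    D.Minimal := by
  have hm0 : m ≠ 0 := by omega
  have hC_nonpos : C ≤ 0 := by rcases hC with rfl | rfl <;> norm_num
  exact hbh.minimal_of_grad_H_eq_zero hm0 hC_nonpos
    (hbh.grad_H_eq_zero_of_einstein hm0 hgauss heinstein)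
end
end

section
/- Let M^m be a biharmonic hypersurface of constant scalar curvature in S^{m+1}. Then the mean curvature H satisfies the Bochner-type differential inequality (1/2)Δ|∇H|² ≥ (1/m)(ΔH)² + (|A|² − 1 + (5/4)m²H²)|∇H|². -/
noncomputable section

open scoped RealInnerProductSpace BigOperators

/-!
Tracing the Gauss equation over an orthonormal frame expresses `|A|²` through the scalar
curvature and `m²H²`, so constant scalar curvature makes `|A|² − m²H²` constant. The first
biharmonic equation then turns `ΔH` into a cubic polynomial in `H`, whose gradient is
`(|A|² − m + 2m²H²)∇H`. The second biharmonic equation says `∇H` is an eigenvector of `A`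
with eigenvalue `−(m/2)H`, which the Gauss equation converts into
`Ric(∇H, ∇H) = (m − 1 − (3/4)m²H²)|∇H|²`. Substituting both into the Bochner formula with
`|∇dH|² ≥ (ΔH)²/m` gives the inequality.
-/

namespace HypersurfaceData

variable {m : ℕ} {M V : Type} [NormedAddCommGroup V] [InnerProductSpace ℝ V]
  [FiniteDimensional ℝ V] (D : HypersurfaceData m M V)

theorem grad_const_mul (a : ℝ) (f : M → ℝ) :
    D.grad (fun p => a * f p) = fun p => a • D.grad f p := by
  simp [D.grad_mul, D.grad_const]

theorem grad_pow_succ (f : M → ℝ) (n : ℕ) :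
    D.grad (fun p => f p ^ (n + 1)) = fun p => ((n + 1) * f p ^ n) • D.grad f p := by
  induction n with
  | zero => simp
  | succ n ih =>
    simp only [pow_succ _ (n + 1), D.grad_mul, ih]
    funext p
    rw [smul_smul, ← add_smul]
    push_cast
    ring_nf

section Gauss

variable {D}

theorem normA2_eq_sum_inner (p : M) :
    D.normA2 p = ∑ i, ⟪D.A p (stdOrthonormalBasis ℝ V i), D.A p (stdOrthonormalBasis ℝ V i)⟫ := by
  rw [normA2, LinearMap.trace_eq_sum_inner _ (stdOrthonormalBasis ℝ V)]
  refine Finset.sum_congr rfl fun i _ => ?_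
  rw [LinearMap.comp_apply, ← D.A_symm, real_inner_comm]

theorem SpaceFormGauss.normA2_eq {C : ℝ} (hgauss : D.SpaceFormGauss C) (p : M) :
    D.normA2 p = m * (m - 1) * C - D.scal p + m ^ 2 * D.H p ^ 2 := by
  set b := stdOrthonormalBasis ℝ V
  have hb : ∀ i, ⟪b i, b i⟫ = 1 := fun i => real_inner_self_eq_norm_sq (b i) ▸ by simp
  have htrA : ∑ i, ⟪D.A p (b i), b i⟫ = m * D.H p := by
    rw [← D.trace_A p, LinearMap.trace_eq_sum_inner _ b]
    exact Finset.sum_congr rfl fun i _ => real_inner_comm _ _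
  have htraced := Finset.sum_congr rfl fun i (_ : i ∈ Finset.univ) => hgauss p (b i) (b i)
  simp only [hb, Finset.sum_add_distrib, Finset.sum_sub_distrib, ← Finset.mul_sum,
    Finset.sum_const, Finset.card_univ, Fintype.card_fin, D.dimV, nsmul_eq_mul] at htraced
  rw [htrA] at htraced
  rw [normA2_eq_sum_inner, scal]
  linear_combination -htraced

theorem SpaceFormGauss.normA2_sub_sq_eq {C : ℝ} (hgauss : D.SpaceFormGauss C)
    (hscal : D.ConstScal) (p q : M) :
    D.normA2 p - m ^ 2 * D.H p ^ 2 = D.normA2 q - m ^ 2 * D.H q ^ 2 := by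
  rw [hgauss.normA2_eq, hgauss.normA2_eq, hscal p q]
  ring

theorem SpaceFormGauss.ricci_of_eigenvector {C : ℝ} (hgauss : D.SpaceFormGauss C) {p : M}
    {X : V} {μ : ℝ} (hX : D.A p X = μ • X) :
    D.ricci p X X = ((m - 1) * C - μ ^ 2 + m * D.H p * μ) * ‖X‖ ^ 2 := by
  have h := hgauss p X X
  rw [hX, real_inner_smul_left, real_inner_smul_left, real_inner_smul_right,
    real_inner_self_eq_norm_sq] at h
  linear_combination -h

end Gauss

section Biharmonic

variable {D}

theorem IsBiharmonic.A_grad_H {lam : ℝ} (hbh : D.IsBiharmonic lam) (p : M) :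
    D.A p (D.grad D.H p) = (-(m / 2 * D.H p)) • D.grad D.H p := by
  rw [neg_smul]
  exact eq_neg_of_add_eq_zero_left (hbh.2 p)

theorem IsBiharmonic.ricci_grad_H {lam C : ℝ} (hbh : D.IsBiharmonic lam)
    (hgauss : D.SpaceFormGauss C) (p : M) :
    D.ricci p (D.grad D.H p) (D.grad D.H p)
      = ((m - 1) * C - 3 / 4 * m ^ 2 * D.H p ^ 2) * ‖D.grad D.H p‖ ^ 2 := by
  rw [hgauss.ricci_of_eigenvector (hbh.A_grad_H p)]
  ring

theorem IsBiharmonic.grad_lap_H {lam : ℝ} (hbh : D.IsBiharmonic lam)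
    (hconst : ∀ p q, D.normA2 p - m ^ 2 * D.H p ^ 2 = D.normA2 q - m ^ 2 * D.H q ^ 2)
    (p : M) :
    D.grad (D.lap D.H) p = (D.normA2 p - lam + 2 * m ^ 2 * D.H p ^ 2) • D.grad D.H p := by
  set k := D.normA2 p - m ^ 2 * D.H p ^ 2 - lam
  have hcubic : D.lap D.H = fun q => k * D.H q + m ^ 2 * D.H q ^ (2 + 1) := by
    funext q
    rw [hbh.1 q]
    linear_combination D.H q * hconst q p
  rw [hcubic, D.grad_add, D.grad_const_mul, D.grad_const_mul, D.grad_pow_succ]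
  simp only [smul_smul, ← add_smul, k]
  congr 1
  push_cast
  ring

end Biharmonic

theorem one_div_mul_sq_lap_le_hess2 (f : M → ℝ) (p : M) :
    1 / (m : ℝ) * D.lap f p ^ 2 ≤ D.hess2 f p := by
  rcases m.eq_zero_or_pos with rfl | hm
  · simpa using D.hess2_nonneg f p
  · rw [one_div_mul_eq_div, div_le_iff₀ (by positivity), mul_comm]
    exact D.hess2_bound f p

theorem le_half_lap_norm_grad_sq (f : M → ℝ) (p : M) :
    1 / (m : ℝ) * D.lap f p ^ 2 + D.ricci p (D.grad f p) (D.grad f p)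
        + ⟪D.grad f p, D.grad (D.lap f) p⟫
      ≤ 1 / 2 * D.lap (fun q => ‖D.grad f q‖ ^ 2) p := by
  rw [D.bochner]
  linarith [D.one_div_mul_sq_lap_le_hess2 f p]

end HypersurfaceData

theorem bochner_inequality_biharmonic_sphere_general {M V : Type}
    [NormedAddCommGroup V] [InnerProductSpace ℝ V] [FiniteDimensional ℝ V]
    {m : ℕ} (D : HypersurfaceData m M V)
    (hgauss : D.SpaceFormGauss 1) (hscal : D.ConstScal)
    (hbh : D.IsBiharmonic m) :
    ∀ p, 1 / (m : ℝ) * (D.lap D.H p) ^ 2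
        + (D.normA2 p - 1 + 5 / 4 * (m : ℝ) ^ 2 * (D.H p) ^ 2) * ‖D.grad D.H p‖ ^ 2
      ≤ 1 / 2 * D.lap (fun q => ‖D.grad D.H q‖ ^ 2) p := by
  intro p
  calc _ = 1 / (m : ℝ) * D.lap D.H p ^ 2 + D.ricci p (D.grad D.H p) (D.grad D.H p)
        + ⟪D.grad D.H p, D.grad (D.lap D.H) p⟫ := by
        rw [hbh.ricci_grad_H hgauss, hbh.grad_lap_H (hgauss.normA2_sub_sq_eq hscal),
          real_inner_smul_right, real_inner_self_eq_norm_sq]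
        ring
    _ ≤ _ := D.le_half_lap_norm_grad_sq D.H p

/-- **The Bochner-type inequality for a biharmonic hypersurface of constant scalar
curvature in the unit sphere.**  Let `M^m` be a biharmonic hypersurface of constant
scalar curvature in `S^{m+1}`.  Then the mean curvature `H` satisfies
`(1/2)Δ|∇H|² ≥ (1/m)(ΔH)² + (|A|² − 1 + (5/4)m²H²)|∇H|²` at every point. -/
theorem bochner_inequality_biharmonic_sphere {M V : Type}
    [NormedAddCommGroup V] [InnerProductSpace ℝ V] [FiniteDimensional ℝ V]
    {m : ℕ} (hm : 0 < m) (D : HypersurfaceData m M V)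
    (hgauss : D.SpaceFormGauss 1) (hscal : D.ConstScal)
    (hbh : D.IsBiharmonic m) :
    ∀ p, 1 / (m : ℝ) * (D.lap D.H p) ^ 2
        + (D.normA2 p - 1 + 5 / 4 * (m : ℝ) ^ 2 * (D.H p) ^ 2) * ‖D.grad D.H p‖ ^ 2
      ≤ 1 / 2 * D.lap (fun q => ‖D.grad D.H q‖ ^ 2) p :=
  bochner_inequality_biharmonic_sphere_general D hgauss hscal hbh
end
end
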